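/- arXiv:math/9204206 — 5 statements merged into one kernel-verified Lean document; each statement's English description precedes it below -/
import Mathlib

section
/- If i ≠ 1 and w is a reduced word in F that does not begin or end with x_1 or x_1^{-1} (and w ≠ 1), then σ_i(w) also is a nontrivial reduced word that does not begin or end with x_1 or x_1^{-1}, and the same holds for σ_i^{-1}(w). -/
/-- The free group on generators `x 1, x 2, x 3, …`. -/
abbrev F := FreeGroup ℕ+

/-- The generators of `F`. -/
noncomputable def x (i : ℕ+) : F := FreeGroup.of i

/-- `σ` is the family of Artin automorphisms:
`σ i (x i) = x i * x (i+1) * (x i)⁻¹`, `σ i (x (i+1)) = x i`, `σ i (x j) = x j` otherwise. -/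
def IsArtin (σ : ℕ+ → MulAut F) : Prop :=
  ∀ i : ℕ+, σ i (x i) = x i * x (i + 1) * (x i)⁻¹ ∧ σ i (x (i + 1)) = x i ∧
    ∀ j : ℕ+, j ≠ i → j ≠ i + 1 → σ i (x j) = x j

/-- The set of nontrivial elements of `F` whose reduced word neither begins
nor ends with `x 1` or `(x 1)⁻¹`. -/
def W : Set F :=
  {w | w ≠ 1 ∧ (∀ p ∈ w.toWord.head?, p.1 ≠ 1) ∧ (∀ p ∈ w.toWord.getLast?, p.1 ≠ 1)}

/-
Color each generator `x j` by whether `j = 1`. An injective endomorphism `φ` of a free group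
sending every generator into the subgroup of words of that generator's color preserves the
color of the first letter of a reduced word, and hence (applied to `w⁻¹`) of the last one:
split `w` as `s * t` with `s` its first maximal monochromatic syllable; then `φ s` is a
nontrivial word of the color of `s`, and by induction `φ t` starts with another color, so the
reduced word of `φ s * φ t` is the concatenation. Both `σ i` and `(σ i)⁻¹` have this property
for every coloring that gives `x i` and `x (i + 1)` the same color, which holds here because
`i ≠ 1`.
-/

namespace FreeGroup

variable {α β : Type*} [DecidableEq α]

def monochromaticSubgroup (c : α → β) (b : β) : Subgroup (FreeGroup α) where
  carrier := {w | ∀ p ∈ w.toWord, c p.1 = b}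
  one_mem' := by simp [toWord_one]
  mul_mem' {u v} hu hv p hp := by
    rcases List.mem_append.1 ((toWord_mul_sublist u v).subset hp) with h | h
    exacts [hu p h, hv p h]
  inv_mem' {u} hu p hp := by
    simp only [toWord_inv, invRev, List.mem_reverse, List.mem_map] at hp
    obtain ⟨q, hq, rfl⟩ := hp
    exact hu q hq

def firstColor (c : α → β) (w : FreeGroup α) : Option β := w.toWord.head?.map fun p => c p.1

def lastColor (c : α → β) (w : FreeGroup α) : Option β := w.toWord.getLast?.map fun p => c p.1

variable {c : α → β} {b : β}

lemma of_mem_monochromaticSubgroup (c : α → β) (a : α) :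
    of a ∈ monochromaticSubgroup c (c a) := by
  simp [monochromaticSubgroup, toWord_of]

lemma monochromaticSubgroup_le_closure :
    monochromaticSubgroup c b ≤ Subgroup.closure (of '' {a | c a = b}) := by
  intro w hw
  rw [← mk_toWord (x := w), ← lift_of_apply (mk _), lift_mk]
  refine Subgroup.list_prod_mem _ fun g hg => ?_
  obtain ⟨p, hp, rfl⟩ := List.mem_map.1 hg
  have h : of p.1 ∈ Subgroup.closure (of '' {a | c a = b}) :=
    Subgroup.subset_closure (Set.mem_image_of_mem of (hw p hp))
  cases p.2
  exacts [Subgroup.inv_mem _ h, h]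

lemma map_mem_monochromaticSubgroup {φ : FreeGroup α →* FreeGroup α}
    (hφ : ∀ a, φ (of a) ∈ monochromaticSubgroup c (c a)) {w : FreeGroup α}
    (hw : w ∈ monochromaticSubgroup c b) : φ w ∈ monochromaticSubgroup c b := by
  refine (Subgroup.closure_le ((monochromaticSubgroup c b).comap φ)).2 ?_
    (monochromaticSubgroup_le_closure hw)
  rintro _ ⟨a, rfl, rfl⟩
  exact hφ a

lemma firstColor_eq_none_iff {w : FreeGroup α} : firstColor c w = none ↔ w = 1 := by
  simp [firstColor, toWord_eq_nil_iff]

lemma lastColor_eq_firstColor_inv (w : FreeGroup α) : lastColor c w = firstColor c w⁻¹ := by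
  simp [lastColor, firstColor, toWord_inv, invRev, List.head?_reverse, Option.map_map,
    Function.comp_def]

lemma toWord_mul_of_mem_monochromaticSubgroup {u v : FreeGroup α}
    (hu : u ∈ monochromaticSubgroup c b) (hv : firstColor c v ≠ some b) :
    (u * v).toWord = u.toWord ++ v.toWord := by
  rw [toWord_mul]
  refine IsReduced.reduce_eq (isReduced_toWord.append isReduced_toWord ?_)
  intro p hp q hq hpq
  refine absurd ?_ hv
  rw [firstColor, Option.mem_def.1 hq, Option.map_some, ← hpq,
    hu p (List.mem_of_mem_getLast? hp)]

lemma firstColor_mul_of_mem_monochromaticSubgroup {u v : FreeGroup α}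
    (hu : u ∈ monochromaticSubgroup c b) (hu1 : u ≠ 1) (hv : firstColor c v ≠ some b) :
    firstColor c (u * v) = some b := by
  obtain ⟨p, L, hL⟩ := List.exists_cons_of_ne_nil (mt toWord_eq_nil_iff.1 hu1)
  simp [firstColor, toWord_mul_of_mem_monochromaticSubgroup hu hv, hL,
    hu p (hL ▸ List.mem_cons_self)]

lemma exists_eq_mul_of_firstColor_eq_some {w : FreeGroup α} (hw : firstColor c w = some b) :
    ∃ s t, s ∈ monochromaticSubgroup c b ∧ s ≠ 1 ∧ firstColor c t ≠ some b ∧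
      t.toWord.length < w.toWord.length ∧ w = s * t := by
  classical
  obtain ⟨p, L, hL⟩ : ∃ p L, w.toWord = p :: L := by
    cases h : w.toWord <;> simp_all [firstColor]
  have hp : c p.1 = b := by simpa [firstColor, hL] using hw
  set q : α × Bool → Bool := fun p => decide (c p.1 = b)
  have hsplit : w.toWord = (p :: L.takeWhile q) ++ L.dropWhile q := by
    rw [hL, List.cons_append, List.takeWhile_append_dropWhile]
  have hred : IsReduced w.toWord := isReduced_toWord
  rw [hsplit] at hred
  have hsWord : (mk (p :: L.takeWhile q)).toWord = p :: L.takeWhile q :=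
    toWord_mk.trans (hred.infix (List.prefix_append _ _).isInfix).reduce_eq
  have htWord : (mk (L.dropWhile q)).toWord = L.dropWhile q :=
    toWord_mk.trans (hred.infix (List.suffix_append _ _).isInfix).reduce_eq
  refine ⟨mk (p :: L.takeWhile q), mk (L.dropWhile q), ?_, ?_, ?_, ?_, ?_⟩
  · intro r hr
    rw [hsWord] at hr
    rcases List.mem_cons.1 hr with rfl | hr
    · exact hp
    · simpa [q] using List.mem_takeWhile_imp hr
  · intro h
    simp [h, toWord_one] at hsWord
  · have hhead := List.head?_dropWhile_not q L
    rw [firstColor, htWord]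
    cases h : (L.dropWhile q).head? with
    | none => simp
    | some r => simp_all [q]
  · rw [htWord, hL, List.length_cons]
    exact Nat.lt_succ_of_le (List.dropWhile_suffix _).length_le
  · rw [mul_mk, ← hsplit, mk_toWord]

theorem firstColor_map {φ : FreeGroup α →* FreeGroup α} (hinj : Function.Injective φ)
    (hφ : ∀ a, φ (of a) ∈ monochromaticSubgroup c (c a)) (w : FreeGroup α) :
    firstColor c (φ w) = firstColor c w := by
  induction hn : w.toWord.length using Nat.strong_induction_on generalizing w with
  | _ n ih =>
  cases hw : firstColor c w with
  | none => rw [firstColor_eq_none_iff.1 hw, _root_.map_one, firstColor_eq_none_iff]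
  | some b =>
    obtain ⟨s, t, hs, hs1, ht, hlt, rfl⟩ := exists_eq_mul_of_firstColor_eq_some hw
    rw [_root_.map_mul]
    refine firstColor_mul_of_mem_monochromaticSubgroup (map_mem_monochromaticSubgroup hφ hs) ?_ ?_
    · exact (map_ne_one_iff φ hinj).2 hs1
    · rwa [ih _ (hn ▸ hlt) t rfl]

theorem lastColor_map {φ : FreeGroup α →* FreeGroup α} (hinj : Function.Injective φ)
    (hφ : ∀ a, φ (of a) ∈ monochromaticSubgroup c (c a)) (w : FreeGroup α) :
    lastColor c (φ w) = lastColor c w := by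
  rw [lastColor_eq_firstColor_inv, lastColor_eq_firstColor_inv, ← _root_.map_inv,
    firstColor_map hinj hφ]

end FreeGroup

open FreeGroup

def isOne (j : ℕ+) : Bool := decide (j = 1)

lemma forall_mem_fst_ne_one_iff (o : Option (ℕ+ × Bool)) :
    (∀ p ∈ o, p.1 ≠ 1) ↔ o.map (fun p => isOne p.1) ≠ some true := by
  cases o <;> simp [isOne]

lemma mem_W_iff {w : F} :
    w ∈ W ↔ w ≠ 1 ∧ firstColor isOne w ≠ some true ∧
      lastColor isOne w ≠ some true := by
  simp only [W, Set.mem_ofPred_eq, forall_mem_fst_ne_one_iff, firstColor, lastColor]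

lemma map_mem_W {φ : F →* F} (hinj : Function.Injective φ)
    (hφ : ∀ a, φ (of a) ∈ monochromaticSubgroup isOne (isOne a)) {w : F} (hw : w ∈ W) :
    φ w ∈ W := by
  rw [mem_W_iff, firstColor_map hinj hφ, lastColor_map hinj hφ, map_ne_one_iff φ hinj]
  exact mem_W_iff.1 hw

namespace IsArtin

variable {σ : ℕ+ → MulAut F} {β : Type*} {c : ℕ+ → β}

lemma inv_apply_x_self (hσ : IsArtin σ) (i : ℕ+) : (σ i)⁻¹ (x i) = x (i + 1) :=
  (MulEquiv.symm_apply_eq _).2 (hσ i).2.1.symm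

lemma inv_apply_x_add_one (hσ : IsArtin σ) (i : ℕ+) :
    (σ i)⁻¹ (x (i + 1)) = (x (i + 1))⁻¹ * x i * x (i + 1) := by
  refine (MulEquiv.symm_apply_eq _).2 ?_
  simp only [_root_.map_mul, _root_.map_inv, (hσ i).1, (hσ i).2.1]
  group

lemma inv_apply_x_of_ne (hσ : IsArtin σ) {i j : ℕ+} (hji : j ≠ i) (hji' : j ≠ i + 1) :
    (σ i)⁻¹ (x j) = x j :=
  (MulEquiv.symm_apply_eq _).2 ((hσ i).2.2 j hji hji').symm

lemma apply_mem_monochromaticSubgroup (hσ : IsArtin σ) {i : ℕ+} (hc : c (i + 1) = c i)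
    (a : ℕ+) :
    σ i (x a) ∈ monochromaticSubgroup c (c a) := by
  have hx (j : ℕ+) : x j ∈ monochromaticSubgroup c (c j) := of_mem_monochromaticSubgroup c j
  by_cases hai : a = i
  · subst hai
    rw [(hσ a).1]
    exact mul_mem (mul_mem (hx a) (hc ▸ hx (a + 1))) (inv_mem (hx a))
  by_cases hai' : a = i + 1
  · subst hai'
    rw [(hσ i).2.1, hc]
    exact hx i
  · rw [(hσ i).2.2 a hai hai']
    exact hx a

lemma inv_apply_mem_monochromaticSubgroup (hσ : IsArtin σ) {i : ℕ+} (hc : c (i + 1) = c i)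
    (a : ℕ+) :
    (σ i)⁻¹ (x a) ∈ monochromaticSubgroup c (c a) := by
  have hx (j : ℕ+) : x j ∈ monochromaticSubgroup c (c j) := of_mem_monochromaticSubgroup c j
  by_cases hai : a = i
  · subst hai
    rw [hσ.inv_apply_x_self, ← hc]
    exact hx (a + 1)
  by_cases hai' : a = i + 1
  · subst hai'
    rw [hσ.inv_apply_x_add_one]
    exact mul_mem (mul_mem (inv_mem (hx _)) (hc ▸ hx i)) (hx _)
  · rw [hσ.inv_apply_x_of_ne hai hai']
    exact hx a

end IsArtin

theorem stmt3 (σ : ℕ+ → MulAut F) (hσ : IsArtin σ) (i : ℕ+) (hi : i ≠ 1)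
    (w : F) (hw : w ∈ W) : σ i w ∈ W ∧ (σ i)⁻¹ w ∈ W := by
  have hc : isOne (i + 1) = isOne i := by simp [isOne, hi, (PNat.lt_add_left 1 i).ne']
  refine ⟨map_mem_W (φ := (σ i).toMonoidHom) (σ i).injective ?_ hw,
    map_mem_W (φ := ((σ i)⁻¹ : MulAut F).toMonoidHom) (σ i)⁻¹.injective ?_ hw⟩
  exacts [hσ.apply_mem_monochromaticSubgroup hc, hσ.inv_apply_mem_monochromaticSubgroup hc]
end

section
/- If w ∈ W (w is a nontrivial element of F whose reduced word does not begin or end with x_1^{±1}), then σ_1(x_1 w x_1^{-1}) = x_1 w' x_1^{-1} for some w' ∈ W. -/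
/-!
Put `ρ g = x₁⁻¹ σ₁(g) x₁`, so that `ρ` swaps `x₁` and `x₂` and conjugates every other generator
by `x₁`, and `σ₁(x₁ w x₁⁻¹) = x₁ (x₂ ρ(w) x₂⁻¹) x₁⁻¹`. The letters `x₂^{±1}` of `ρ(w)` come from
the letters `x₁^{±1}` of `w` and never cancel, so if the reduced word of `w` does not begin with
`x₁^{±1}`, the reduced word of `ρ(w)` does not begin with `x₂^{±1}`; applied to `w⁻¹`, it does not
end with `x₂^{±1}` either. Hence `x₂ ρ(w) x₂⁻¹` is reduced as written and lies in `W`. The claim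
about the first letter is proved by induction on the reduced word of `w`, keeping track of how the
reduced word of `ρ(w)` begins in terms of the first letter of `w`.
-/

open FreeGroup hiding map_mul map_inv

namespace FreeGroup

variable {α : Type*}

theorem snd_eq_of_ne_of_fst_eq {p : α × Bool} {i : α} {b : Bool} (h : p ≠ (i, !b))
    (hi : i = p.1) : b = p.2 := by
  obtain ⟨j, c⟩ := p
  subst hi
  cases b <;> cases c <;> simp_all

variable [DecidableEq α]

theorem toWord_mk_singleton_mul {a : α × Bool} {g : FreeGroup α}
    (h : ∀ p ∈ g.toWord.head?, a.1 = p.1 → a.2 = p.2) :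
    (mk [a] * g).toWord = a :: g.toWord := by
  have hred : IsReduced (a :: g.toWord) := by
    rcases hg : g.toWord with _ | ⟨p, t⟩
    · exact IsReduced.singleton
    · rw [hg] at h
      exact isReduced_cons_cons.2 ⟨h p rfl, hg ▸ isReduced_toWord⟩
  conv_lhs => rw [← mk_toWord (x := g), mul_mk, toWord_mk]
  exact hred.reduce_eq

theorem toWord_mk_singleton_mul_of_eq_cons {a : α × Bool} {g : FreeGroup α}
    {t : List (α × Bool)} (h : g.toWord = (a.1, !a.2) :: t) : (mk [a] * g).toWord = t := by
  have ht : IsReduced t := (h ▸ isReduced_toWord (x := g)).infix (List.suffix_cons _ _).isInfix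
  conv_lhs => rw [← mk_toWord (x := g), h, mul_mk, toWord_mk]
  exact (reduce.Step.eq Red.Step.cons_not).trans ht.reduce_eq

theorem head?_toWord_inv (g : FreeGroup α) :
    g⁻¹.toWord.head? = g.toWord.getLast?.map fun p => (p.1, !p.2) := by
  simp [toWord_inv, invRev, List.head?_reverse, List.getLast?_map]

theorem forall_mem_getLast?_toWord_iff (g : FreeGroup α) (P : α → Prop) :
    (∀ p ∈ g.toWord.getLast?, P p.1) ↔ ∀ p ∈ g⁻¹.toWord.head?, P p.1 := by
  rw [head?_toWord_inv]
  rcases g.toWord.getLast? with _ | ⟨b, e⟩ <;> simp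

theorem toWord_of_mul_mul_inv_of {a : α} {g : FreeGroup α} (hg : g ≠ 1)
    (hhead : ∀ p ∈ g.toWord.head?, p.1 ≠ a) (hlast : ∀ p ∈ g.toWord.getLast?, p.1 ≠ a) :
    (of a * g * (of a)⁻¹).toWord = [(a, true)] ++ g.toWord ++ [(a, false)] := by
  have hne : g.toWord ≠ [] := by rwa [Ne, toWord_eq_nil_iff]
  have hred : IsReduced ([(a, true)] ++ g.toWord ++ [(a, false)]) := by
    refine IsReduced.append_overlap ?_ ?_ hne
    · obtain ⟨p, t, hpt⟩ := List.exists_cons_of_ne_nil hne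
      rw [hpt] at hhead ⊢
      exact isReduced_cons_cons.2 ⟨fun h => absurd h.symm (hhead p rfl), hpt ▸ isReduced_toWord⟩
    · refine List.isChain_append.2 ⟨isReduced_toWord, IsReduced.singleton, ?_⟩
      rintro p hp _ ⟨⟩ h
      exact absurd h (hlast p hp)
  have : of a * g * (of a)⁻¹ = mk ([(a, true)] ++ g.toWord ++ [(a, false)]) := by
    rw [← mul_mk, ← mul_mk, mk_toWord]
    rfl
  rw [this, toWord_mk, hred.reduce_eq]

end FreeGroup

namespace Artin

noncomputable def rho : F →* F :=
  FreeGroup.lift fun i => if i = 1 then x 2 else if i = 2 then x 1 else (x 1)⁻¹ * x i * x 1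

theorem rho_x (i : ℕ+) :
    rho (x i) = if i = 1 then x 2 else if i = 2 then x 1 else (x 1)⁻¹ * x i * x 1 :=
  lift_apply_of

theorem sigma_one_apply {σ : ℕ+ → MulAut F} (hσ : IsArtin σ) (g : F) :
    σ 1 g = x 1 * rho g * (x 1)⁻¹ := by
  suffices h : (σ 1).toMonoidHom = (MulAut.conj (x 1)).toMonoidHom.comp rho from
    DFunLike.congr_fun h g
  refine FreeGroup.ext_hom _ _ fun i => ?_
  obtain ⟨h1, h2, hj⟩ := hσ 1
  change σ 1 (x i) = x 1 * rho (x i) * (x 1)⁻¹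
  rw [rho_x]
  split_ifs with hi1 hi2
  · subst hi1; exact h1
  · subst hi2; rw [show σ 1 (x 2) = x 1 from h2]; group
  · rw [hj i hi1 hi2]; group

theorem rho_mk_one (e : Bool) : rho (mk [(1, e)]) = mk [(2, e)] := by
  cases e
  · change rho (x 1)⁻¹ = (x 2)⁻¹
    rw [map_inv, rho_x, if_pos rfl]
  · exact rho_x 1

theorem rho_mk_two (e : Bool) : rho (mk [(2, e)]) = mk [(1, e)] := by
  cases e
  · change rho (x 2)⁻¹ = (x 1)⁻¹
    rw [map_inv, rho_x, if_neg (by decide), if_pos rfl]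
  · exact rho_x 2

theorem rho_mk_of_ne {a : ℕ+ × Bool} (h1 : a.1 ≠ 1) (h2 : a.1 ≠ 2) :
    rho (mk [a]) = mk [(1, false)] * (mk [a] * mk [(1, true)]) := by
  obtain ⟨i, _ | _⟩ := a
  · change rho (x i)⁻¹ = (x 1)⁻¹ * ((x i)⁻¹ * x 1)
    rw [map_inv, rho_x, if_neg h1, if_neg h2]
    group
  · change rho (x i) = (x 1)⁻¹ * (x i * x 1)
    rw [rho_x, if_neg h1, if_neg h2, mul_assoc]

theorem letter_cases (a : ℕ+ × Bool) :
    (∃ e, a = (1, e)) ∨ a = (2, true) ∨ a = (2, false) ∨ (a.1 ≠ 1 ∧ a.1 ≠ 2) := by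
  obtain ⟨i, e⟩ := a
  by_cases h1 : i = 1
  · exact .inl ⟨e, by rw [h1]⟩
  by_cases h2 : i = 2
  · subst h2; cases e <;> simp
  · exact .inr (.inr (.inr ⟨h1, h2⟩))

/-- `ImageHead g.toWord.head? (rho g).toWord`: how the reduced word of `rho g` begins, in terms of
the first letter of `g`. The clause for `x₂⁻¹` looks one letter further because in the image
`x₁⁻¹ x_j x₁ · x₁⁻¹ ⋯` of `x_j x₂⁻¹ ⋯` the letter `x_j` meets the letter after that `x₁⁻¹`. -/
inductive ImageHead : Option (ℕ+ × Bool) → List (ℕ+ × Bool) → Prop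
  | nil : ImageHead none []
  | one (e : Bool) (t : List (ℕ+ × Bool)) : ImageHead (some (1, e)) ((2, e) :: t)
  | two_true (p : ℕ+ × Bool) (t : List (ℕ+ × Bool)) (hp₁ : p.1 ≠ 2) (hp₂ : p ≠ (1, false)) :
      ImageHead (some (2, true)) (p :: t)
  | two_false (t : List (ℕ+ × Bool)) (ht : ∀ p ∈ t.head?, p.1 = 1 ∨ p.1 = 2) :
      ImageHead (some (2, false)) ((1, false) :: t)
  | large (a : ℕ+ × Bool) (t : List (ℕ+ × Bool)) (ha₁ : a.1 ≠ 1) (ha₂ : a.1 ≠ 2) :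
      ImageHead (some a) ((1, false) :: a :: t)

namespace ImageHead

variable {B : Option (ℕ+ × Bool)} {g : F}

theorem mk_two_mul (e : Bool) (hg : ImageHead B g.toWord)
    (hB : ∀ b ∈ B, (1 : ℕ+) = b.1 → e = b.2) :
    ImageHead (some (1, e)) (mk [(2, e)] * g).toWord := by
  suffices h : ∀ p ∈ g.toWord.head?, (2 : ℕ+) = p.1 → e = p.2 by
    rw [toWord_mk_singleton_mul h]
    exact .one e _
  generalize g.toWord = T at hg ⊢
  cases hg with
  | nil => simp
  | one e' t => simpa using hB _ rfl
  | two_true p t hp₁ _ => simpa using fun h : (2 : ℕ+) = p.1 => absurd h.symm hp₁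
  | two_false t _ => simp
  | large a t _ _ => simp

theorem mk_one_true_mul (hg : ImageHead B g.toWord)
    (hB : ∀ b ∈ B, (2 : ℕ+) = b.1 → true = b.2) :
    ImageHead (some (2, true)) (mk [(1, true)] * g).toWord := by
  generalize hT : g.toWord = T at hg
  cases hg with
  | nil => rw [toWord_mk_singleton_mul (by simp [hT])]; exact .two_true _ _ (by decide) (by simp)
  | one e t =>
    rw [toWord_mk_singleton_mul (by simp [hT])]; exact .two_true _ _ (by decide) (by simp)
  | two_true p t hp₁ hp₂ =>
    rw [toWord_mk_singleton_mul (by simpa [hT] using snd_eq_of_ne_of_fst_eq (b := true) hp₂)]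
    exact .two_true _ _ (by decide) (by simp)
  | two_false t _ => simp at hB
  | large a t ha₁ ha₂ =>
    rw [toWord_mk_singleton_mul_of_eq_cons hT]
    exact .two_true a t ha₂ fun h => ha₁ (congrArg Prod.fst h)

theorem mk_one_false_mul (hg : ImageHead B g.toWord)
    (hB : ∀ b ∈ B, (2 : ℕ+) = b.1 → false = b.2) :
    ImageHead (some (2, false)) (mk [(1, false)] * g).toWord := by
  suffices h : ∀ p ∈ g.toWord.head?, (p.1 = 1 ∨ p.1 = 2) ∧ p ≠ (1, true) by
    rw [toWord_mk_singleton_mul fun p hp hp₁ => ?_]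
    · exact .two_false _ fun p hp => (h p hp).1
    · exact snd_eq_of_ne_of_fst_eq (h p hp).2 hp₁
  generalize g.toWord = T at hg ⊢
  cases hg with
  | nil => simp
  | one e t => simp
  | two_true _ _ _ _ => simp at hB
  | two_false t _ => simp
  | large a t _ _ => simp

theorem mk_large_mul {a : ℕ+ × Bool} (ha₁ : a.1 ≠ 1) (ha₂ : a.1 ≠ 2) (hg : ImageHead B g.toWord)
    (hB : ∀ b ∈ B, a.1 = b.1 → a.2 = b.2) :
    ImageHead (some a) (mk [(1, false)] * (mk [a] * (mk [(1, true)] * g))).toWord := by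
  suffices h : ∀ r ∈ (mk [(1, true)] * g).toWord.head?, a.1 = r.1 → a.2 = r.2 by
    have hU := toWord_mk_singleton_mul h
    rw [toWord_mk_singleton_mul (by simpa [hU] using fun h => absurd h.symm ha₁), hU]
    exact .large a _ ha₁ ha₂
  generalize hT : g.toWord = T at hg
  cases hg with
  | nil => rw [toWord_mk_singleton_mul (by simp [hT])]; simpa using fun h => absurd h ha₁
  | one e t => rw [toWord_mk_singleton_mul (by simp [hT])]; simpa using fun h => absurd h ha₁
  | two_true p t hp₁ hp₂ =>
    rw [toWord_mk_singleton_mul (by simpa [hT] using snd_eq_of_ne_of_fst_eq (b := true) hp₂)]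
    simpa using fun h => absurd h ha₁
  | two_false t ht =>
    rw [toWord_mk_singleton_mul_of_eq_cons hT]
    intro r hr h
    rcases ht r hr with h' | h' <;> simp_all
  | large b t _ _ =>
    rw [toWord_mk_singleton_mul_of_eq_cons hT]
    simpa using hB

end ImageHead

theorem imageHead_rho (g : F) : ImageHead g.toWord.head? (rho g).toWord := by
  suffices h : ∀ L, IsReduced L → ImageHead L.head? (rho (mk L)).toWord by
    simpa only [mk_toWord] using h g.toWord isReduced_toWord
  intro L
  induction L with
  | nil => intro; exact .nil
  | cons a L ih =>
    intro hred
    have hL : IsReduced L := hred.infix (List.suffix_cons a L).isInfix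
    have hB : ∀ b ∈ L.head?, a.1 = b.1 → a.2 = b.2 := by
      rcases L with _ | ⟨b, t⟩
      · simp
      · simpa using (isReduced_cons_cons.1 hred).1
    rw [List.head?_cons, show mk (a :: L) = mk [a] * mk L from rfl, map_mul]
    rcases letter_cases a with ⟨e, rfl⟩ | rfl | rfl | ⟨ha₁, ha₂⟩
    · rw [rho_mk_one]; exact (ih hL).mk_two_mul e hB
    · rw [rho_mk_two]; exact (ih hL).mk_one_true_mul hB
    · rw [rho_mk_two]; exact (ih hL).mk_one_false_mul hB
    · rw [rho_mk_of_ne ha₁ ha₂, mul_assoc, mul_assoc]; exact (ih hL).mk_large_mul ha₁ ha₂ hB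

theorem rho_head_fst_ne_two {g : F} (hg : ∀ p ∈ g.toWord.head?, p.1 ≠ 1) :
    ∀ p ∈ (rho g).toWord.head?, p.1 ≠ 2 := by
  have h := imageHead_rho g
  generalize g.toWord.head? = B at h hg
  generalize (rho g).toWord = T at h
  cases h <;> simp_all

theorem rho_getLast_fst_ne_two {g : F} (hg : ∀ p ∈ g.toWord.getLast?, p.1 ≠ 1) :
    ∀ p ∈ (rho g).toWord.getLast?, p.1 ≠ 2 := by
  rw [forall_mem_getLast?_toWord_iff _ (· ≠ 2), ← map_inv]
  exact rho_head_fst_ne_two ((forall_mem_getLast?_toWord_iff g (· ≠ 1)).1 hg)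

theorem x_two_mul_mul_inv_mem_W {g : F} (hg : g ≠ 1) (hhead : ∀ p ∈ g.toWord.head?, p.1 ≠ 2)
    (hlast : ∀ p ∈ g.toWord.getLast?, p.1 ≠ 2) : x 2 * g * (x 2)⁻¹ ∈ W := by
  have h := toWord_of_mul_mul_inv_of hg hhead hlast
  refine ⟨?_, ?_, ?_⟩
  · rw [Ne, ← toWord_eq_nil_iff, x, h]; simp
  · simp [x, h]
  · rw [x, h, List.getLast?_append]; simp

end Artin

theorem stmt5 (σ : ℕ+ → MulAut F) (hσ : IsArtin σ) (w : F) (hw : w ∈ W) :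
    ∃ w' ∈ W, σ 1 (x 1 * w * (x 1)⁻¹) = x 1 * w' * (x 1)⁻¹ := by
  obtain ⟨hw₁, hw₂, hw₃⟩ := hw
  have hρw : Artin.rho w ≠ 1 := fun h => hw₁ <| (map_eq_one_iff _ (σ 1).injective).1 <| by
    rw [Artin.sigma_one_apply hσ, h]; group
  refine ⟨x 2 * Artin.rho w * (x 2)⁻¹, Artin.x_two_mul_mul_inv_mem_W hρw
    (Artin.rho_head_fst_ne_two hw₂) (Artin.rho_getLast_fst_ne_two hw₃), ?_⟩
  rw [map_mul, map_mul, map_inv, Artin.sigma_one_apply hσ (x 1), Artin.sigma_one_apply hσ w,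
    Artin.rho_x, if_pos rfl]
  group
end

section
/- If β = α_1 σ_1 α_2 σ_1 ⋯ σ_1 α_n where n ≥ 2 and each α_i lies in the subgroup of B generated by {σ_2, σ_3, …}, then β(x_1) ∈ x_1 W x_1^{-1}, where W is the set of nontrivial elements of F whose reduced word does not begin or end with x_1^{±1}. -/
/-! Let `H` be the subgroup generated by `x 2, x 3, …`. An element of `W` is an alternating
product `h₀ x₁^e₁ h₁ ⋯ x₁^eᵣ hᵣ` with `hᵢ ∈ H ∖ 1`, `eᵢ ≠ 0`, whose reduced word is the
concatenation of the reduced words of the factors. Hence an injective endomorphism sending `x 1` to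
`x s` and `H` into the elements avoiding the letter `x s` maps `W` to the nontrivial elements whose
reduced word neither begins nor ends with `x s`.

The automorphisms in `⟨σ 2, σ 3, …⟩` fix `x 1` and preserve `H`, so they preserve `W` and
`x 1 W x 1⁻¹`. For `σ 1`, write `σ 1 (x 1 w x 1⁻¹) = x 1 (x 2 ψ(w) x 2⁻¹) x 1⁻¹` with
`ψ = x 1⁻¹ σ 1 (·) x 1`; since `ψ (x 1) = x 2` and `ψ H` avoids `x 2`, the reduced word of `ψ w`
neither begins nor ends with `x 2`, so `x 2 ψ(w) x 2⁻¹ ∈ W`. Since `σ 1 (αₙ (x 1)) = x 1 x 2 x 1⁻¹`,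
applying the factors of `β` from right to left keeps the value in `x 1 W x 1⁻¹`.
-/

theorem List.exists_split_at_last_run {α : Type*} {P : α → Prop} :
    ∀ {L : List α}, (∃ a ∈ L, P a) → (∀ a ∈ L.getLast?, ¬P a) →
      ∃ A B C, L = A ++ B ++ C ∧ (∀ a ∈ A.getLast?, ¬P a) ∧ B ≠ [] ∧ (∀ b ∈ B, P b) ∧
        C ≠ [] ∧ ∀ c ∈ C, ¬P c
  | [], ⟨_, ha, _⟩, _ => absurd ha List.not_mem_nil
  | a :: L, hP, hlast => by
    by_cases hL : ∃ b ∈ L, P b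
    · have hL0 : L ≠ [] := by rintro rfl; simp at hL
      rw [List.getLast?_cons_of_ne_nil hL0] at hlast
      obtain ⟨A, B, C, rfl, hA, hB, hBP, hC, hCP⟩ := exists_split_at_last_run hL hlast
      by_cases hA0 : A = [] ∧ P a
      · obtain ⟨rfl, ha⟩ := hA0
        exact ⟨[], a :: B, C, rfl, by simp, by simp, by simpa [ha] using hBP, hC, hCP⟩
      · refine ⟨a :: A, B, C, rfl, ?_, hB, hBP, hC, hCP⟩
        rcases A with _ | ⟨b, A⟩
        · simpa using hA0
        · simpa using hA
    · push Not at hL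
      obtain ⟨b, hb, hPb⟩ := hP
      have ha : P a := by
        rcases List.mem_cons.1 hb with rfl | hb
        exacts [hPb, absurd hPb (hL b hb)]
      have hL0 : L ≠ [] := by rintro rfl; simp at hlast; exact hlast ha
      exact ⟨[], [a], L, rfl, by simp, by simp, by simpa, hL0, hL⟩

namespace FreeGroup

variable {ι κ : Type*} [DecidableEq ι] [DecidableEq κ]

def letterSubgroup (S : Set ι) : Subgroup (FreeGroup ι) where
  carrier := {g | ∀ p ∈ g.toWord, p.1 ∈ S}
  one_mem' := by simp [toWord_one]
  mul_mem' {a b} ha hb p hp :=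
    (List.mem_append.1 ((toWord_mul_sublist a b).mem hp)).elim (ha p) (hb p)
  inv_mem' {a} ha p hp := by
    rw [toWord_inv, invRev, List.mem_reverse, List.mem_map] at hp
    obtain ⟨q, hq, rfl⟩ := hp
    exact ha q hq

theorem mem_letterSubgroup {S : Set ι} {g : FreeGroup ι} :
    g ∈ letterSubgroup S ↔ ∀ p ∈ g.toWord, p.1 ∈ S := Iff.rfl

theorem of_mem_letterSubgroup {S : Set ι} {a : ι} (ha : a ∈ S) : of a ∈ letterSubgroup S := by
  simpa [mem_letterSubgroup, toWord_of] using ha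

theorem letterSubgroup_eq_closure (S : Set ι) : letterSubgroup S = Subgroup.closure (of '' S) := by
  refine le_antisymm (fun g hg => ?_) ((Subgroup.closure_le _).2 ?_)
  · rw [← mk_toWord (x := g), ← MonoidHom.id_apply (M := FreeGroup ι) (mk _), ← lift_of_eq_id,
      lift_mk]
    refine Subgroup.list_prod_mem _ fun y hy => ?_
    obtain ⟨⟨a, _ | _⟩, hp, rfl⟩ := List.mem_map.1 hy
    · exact inv_mem (Subgroup.subset_closure ⟨a, hg _ hp, rfl⟩)
    · exact Subgroup.subset_closure ⟨a, hg _ hp, rfl⟩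
  · rintro _ ⟨a, ha, rfl⟩
    exact of_mem_letterSubgroup ha

theorem toWord_mul_of_fst_ne {g h : FreeGroup ι}
    (hgh : ∀ p ∈ g.toWord.getLast?, ∀ q ∈ h.toWord.head?, p.1 ≠ q.1) :
    (g * h).toWord = g.toWord ++ h.toWord := by
  rw [toWord_mul, IsReduced.reduce_eq]
  exact List.isChain_append.2 ⟨isReduced_toWord, isReduced_toWord,
    fun p hp q hq hpq => absurd hpq (hgh p hp q hq)⟩

theorem toWord_mk_of_infix {L : List (ι × Bool)} {g : FreeGroup ι} (h : L <:+: g.toWord) :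
    (mk L).toWord = L := by
  rw [toWord_mk, (isReduced_toWord.infix h).reduce_eq]

/-- `W = endsAvoid 1`. -/
def endsAvoid (t : ι) : Set (FreeGroup ι) :=
  {w | w ≠ 1 ∧ (∀ p ∈ w.toWord.head?, p.1 ≠ t) ∧ ∀ p ∈ w.toWord.getLast?, p.1 ≠ t}

theorem ne_one_iff_toWord_ne_nil {g : FreeGroup ι} : g ≠ 1 ↔ g.toWord ≠ [] :=
  toWord_eq_nil_iff.not.symm

theorem mem_endsAvoid_of_mem_letterSubgroup {t : ι} {h : FreeGroup ι}
    (hh : h ∈ letterSubgroup {t}ᶜ) (h1 : h ≠ 1) : h ∈ endsAvoid t :=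
  ⟨h1, fun p hp => hh p (List.mem_of_mem_head? hp),
    fun p hp => hh p (List.mem_of_mem_getLast? hp)⟩

theorem mul_mul_mem_endsAvoid {t : ι} {w p h : FreeGroup ι} (hw : w ∈ endsAvoid t)
    (hp : p ∈ letterSubgroup {t}) (hp1 : p ≠ 1) (hh : h ∈ letterSubgroup {t}ᶜ) (hh1 : h ≠ 1) :
    w * p * h ∈ endsAvoid t := by
  have hwp : (w * p).toWord = w.toWord ++ p.toWord :=
    toWord_mul_of_fst_ne fun a ha b hb => by
      rw [show b.1 = t from hp b (List.mem_of_mem_head? hb)]; exact hw.2.2 a ha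
  have hwph : (w * p * h).toWord = w.toWord ++ p.toWord ++ h.toWord := by
    rw [toWord_mul_of_fst_ne, hwp]
    intro a ha b hb
    rw [hwp, List.getLast?_append_of_ne_nil _ (ne_one_iff_toWord_ne_nil.1 hp1)] at ha
    rw [show a.1 = t from hp a (List.mem_of_mem_getLast? ha)]
    exact fun hb' => hh b (List.mem_of_mem_head? hb) hb'.symm
  refine ⟨?_, ?_, ?_⟩
  · rw [ne_eq, ← toWord_eq_nil_iff, hwph]
    simp [ne_one_iff_toWord_ne_nil.1 hh1]
  · rw [hwph, List.append_assoc, List.head?_append_of_ne_nil _ (ne_one_iff_toWord_ne_nil.1 hw.1)]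
    exact hw.2.1
  · rw [hwph, List.getLast?_append_of_ne_nil _ (ne_one_iff_toWord_ne_nil.1 hh1)]
    exact fun a ha => hh a (List.mem_of_mem_getLast? ha)

theorem exists_mul_mul_of_mem_endsAvoid {t : ι} {w : FreeGroup ι} (hw : w ∈ endsAvoid t)
    (ht : w ∉ letterSubgroup {t}ᶜ) :
    ∃ u p h, w = u * p * h ∧ u ∈ endsAvoid t ∧ u.toWord.length < w.toWord.length ∧
      p ∈ letterSubgroup {t} ∧ p ≠ 1 ∧ h ∈ letterSubgroup {t}ᶜ ∧ h ≠ 1 := by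
  have hex : ∃ a ∈ w.toWord, a.1 = t := by
    simpa only [mem_letterSubgroup, Set.mem_compl_iff, Set.mem_singleton_iff, not_forall, not_not,
      exists_prop] using ht
  obtain ⟨A, B, C, hABC, hA, hB, hBt, hC, hCt⟩ := List.exists_split_at_last_run hex hw.2.2
  have hA' : (mk A).toWord = A := toWord_mk_of_infix (g := w) ⟨[], B ++ C, by simp [hABC]⟩
  have hB' : (mk B).toWord = B := toWord_mk_of_infix (g := w) ⟨A, C, hABC.symm⟩
  have hC' : (mk C).toWord = C := toWord_mk_of_infix (g := w) ⟨A ++ B, [], by simp [hABC]⟩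
  have hA0 : A ≠ [] := by
    rintro rfl
    obtain ⟨b, B, rfl⟩ := List.exists_cons_of_ne_nil hB
    exact hw.2.1 b (by simp [hABC]) (hBt b (by simp))
  refine ⟨mk A, mk B, mk C, by rw [mul_mk, mul_mk, ← hABC, mk_toWord], ⟨?_, ?_, ?_⟩, ?_,
    ?_, ?_, ?_, ?_⟩
  · rw [ne_one_iff_toWord_ne_nil, hA']; exact hA0
  · rw [hA']
    intro a ha
    refine hw.2.1 a ?_
    rw [hABC, List.append_assoc, List.head?_append_of_ne_nil _ hA0]
    exact ha
  · rwa [hA']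
  · rw [hA', hABC]; simp [List.length_pos_iff.2 hB]
  · rw [mem_letterSubgroup, hB']; exact hBt
  · rw [ne_one_iff_toWord_ne_nil, hB']; exact hB
  · rw [mem_letterSubgroup, hC']; exact hCt
  · rw [ne_one_iff_toWord_ne_nil, hC']; exact hC

theorem endsAvoid_induction {t : ι} {motive : FreeGroup ι → Prop}
    (base : ∀ h ∈ letterSubgroup {t}ᶜ, h ≠ 1 → motive h)
    (step : ∀ u p h, u ∈ endsAvoid t → motive u → p ∈ letterSubgroup {t} → p ≠ 1 →
      h ∈ letterSubgroup {t}ᶜ → h ≠ 1 → motive (u * p * h))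
    {w : FreeGroup ι} (hw : w ∈ endsAvoid t) : motive w := by
  induction hn : w.toWord.length using Nat.strong_induction_on generalizing w with
  | _ n ih =>
    by_cases ht : w ∈ letterSubgroup {t}ᶜ
    · exact base w ht hw.1
    · obtain ⟨u, p, h, rfl, hu, hlt, hp, hp1, hh, hh1⟩ := exists_mul_mul_of_mem_endsAvoid hw ht
      exact step u p h hu (ih _ (hn ▸ hlt) hu rfl) hp hp1 hh hh1

theorem map_mem_letterSubgroup_singleton (φ : FreeGroup ι →* FreeGroup κ) {s : κ} {t : ι}
    (hst : φ (of t) = of s) {p : FreeGroup ι} (hp : p ∈ letterSubgroup {t}) :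
    φ p ∈ letterSubgroup {s} := by
  rw [letterSubgroup_eq_closure, Set.image_singleton] at hp ⊢
  simpa [MonoidHom.map_closure, hst] using Subgroup.mem_map_of_mem φ hp

theorem map_mem_endsAvoid (φ : FreeGroup ι →* FreeGroup κ) (hφ : Function.Injective φ)
    {s : κ} {t : ι} (hst : φ (of t) = of s)
    (hH : ∀ h ∈ letterSubgroup {t}ᶜ, φ h ∈ letterSubgroup {s}ᶜ)
    {w : FreeGroup ι} (hw : w ∈ endsAvoid t) : φ w ∈ endsAvoid s := by
  refine endsAvoid_induction (motive := fun w => φ w ∈ endsAvoid s) (fun h hh h1 => ?_)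
    (fun u p h _ hu hp hp1 hh hh1 => ?_) hw
  · exact mem_endsAvoid_of_mem_letterSubgroup (hH h hh) ((map_ne_one_iff φ hφ).2 h1)
  · rw [_root_.map_mul, _root_.map_mul]
    exact mul_mul_mem_endsAvoid hu (map_mem_letterSubgroup_singleton φ hst hp)
      ((map_ne_one_iff φ hφ).2 hp1) (hH h hh) ((map_ne_one_iff φ hφ).2 hh1)

theorem of_mul_mul_inv_mem_endsAvoid {s t : ι} (hst : s ≠ t) {m : FreeGroup ι}
    (hm : m ∈ endsAvoid s) : of s * m * (of s)⁻¹ ∈ endsAvoid t := by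
  have h1 : (of s * m).toWord = (s, true) :: m.toWord := by
    refine toWord_mul_of_fst_ne ?_
    simp only [toWord_of, List.getLast?_singleton, Option.mem_some_iff]
    rintro p rfl q hq
    exact (hm.2.1 q hq).symm
  have h2 : (of s * m * (of s)⁻¹).toWord = (s, true) :: (m.toWord ++ [(s, false)]) := by
    have hinv : ((of s)⁻¹).toWord = [(s, false)] := by simp [toWord_inv, toWord_of, invRev]
    rw [toWord_mul_of_fst_ne, h1, hinv]
    · rfl
    rw [h1, hinv, List.getLast?_cons_of_ne_nil (ne_one_iff_toWord_ne_nil.1 hm.1), List.head?_cons]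
    rintro p hp _ ⟨⟩
    exact hm.2.2 p hp
  refine ⟨?_, ?_, ?_⟩
  · rw [ne_eq, ← toWord_eq_nil_iff, h2]
    simp
  · rw [h2]
    simpa using hst
  · rw [h2, List.getLast?_cons_of_ne_nil (by simp)]
    simpa using hst

end FreeGroup

open FreeGroup (of letterSubgroup endsAvoid letterSubgroup_eq_closure of_mem_letterSubgroup
  map_mem_endsAvoid)
open scoped Pointwise

noncomputable def xOneStabilizer : Subgroup (MulAut F) :=
  MulAction.stabilizer (MulAut F) (x 1) ⊓
    MulAction.stabilizer (MulAut F) (letterSubgroup {1}ᶜ : Subgroup F)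

namespace xOneStabilizer

variable {τ : MulAut F} (hτ : τ ∈ xOneStabilizer)
include hτ

theorem apply_x_one : τ (x 1) = x 1 :=
  MulAction.mem_stabilizer_iff.1 (Subgroup.mem_inf.1 hτ).1

theorem apply_mem_W {w : F} (hw : w ∈ W) : τ w ∈ W := by
  refine map_mem_endsAvoid τ.toMonoidHom τ.injective (apply_x_one hτ) (fun h hh => ?_) hw
  rw [← MulAction.mem_stabilizer_iff.1 (Subgroup.mem_inf.1 hτ).2]
  exact Subgroup.smul_mem_pointwise_smul h τ _ hh

end xOneStabilizer

namespace IsArtin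

variable {σ : ℕ+ → MulAut F} (hσ : IsArtin σ)
include hσ

theorem smul_letterSubgroup {j : ℕ+} (hj : j ≠ 1) :
    σ j • (letterSubgroup {1}ᶜ : Subgroup F) = letterSubgroup {1}ᶜ := by
  have hx : ∀ {k : ℕ+}, k ≠ 1 → x k ∈ letterSubgroup {1}ᶜ := fun hk => of_mem_letterSubgroup hk
  have hj1 : j + 1 ≠ 1 := (PNat.lt_add_left 1 j).ne'
  obtain ⟨hjj, hjj1, hjk⟩ := hσ j
  rw [letterSubgroup_eq_closure] at hx ⊢
  apply le_antisymm
  · rw [Subgroup.smul_closure, Subgroup.closure_le]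
    rintro _ ⟨_, ⟨k, hk, rfl⟩, rfl⟩
    show σ j (x k) ∈ _
    rcases eq_or_ne k j with rfl | hkj
    · rw [hjj]
      exact mul_mem (mul_mem (hx hk) (hx hj1)) (inv_mem (hx hk))
    rcases eq_or_ne k (j + 1) with rfl | hkj1
    · rw [hjj1]; exact hx hj
    · rw [hjk k hkj hkj1]; exact hx hk
  · rw [Subgroup.closure_le]
    rintro _ ⟨k, hk, rfl⟩
    refine (Subgroup.mem_smul_pointwise_iff_exists _ _ _).2 ?_
    rcases eq_or_ne k j with rfl | hkj
    · exact ⟨x (k + 1), hx hj1, hjj1⟩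
    rcases eq_or_ne k (j + 1) with rfl | hkj1
    · refine ⟨(x (j + 1))⁻¹ * x j * x (j + 1),
        mul_mem (mul_mem (inv_mem (hx hk)) (hx hj)) (hx hk), ?_⟩
      rw [MulAut.smul_def, map_mul, map_mul, map_inv, hjj, hjj1]
      group
      rfl
    · exact ⟨x k, hx hk, hjk k hkj hkj1⟩

theorem closure_le_xOneStabilizer :
    Subgroup.closure {τ : MulAut F | ∃ j : ℕ+, j ≠ 1 ∧ τ = σ j} ≤ xOneStabilizer := by
  rw [Subgroup.closure_le]
  rintro _ ⟨j, hj, rfl⟩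
  exact ⟨(hσ j).2.2 1 (Ne.symm hj) (PNat.lt_add_left 1 j).ne, hσ.smul_letterSubgroup hj⟩

theorem sigma_one_x_one : σ 1 (x 1) = x 1 * x 2 * (x 1)⁻¹ := (hσ 1).1

theorem conj_sigma_one_mem_endsAvoid_two {w : F} (hw : w ∈ W) :
    (x 1)⁻¹ * σ 1 w * x 1 ∈ endsAvoid (2 : ℕ+) := by
  obtain ⟨h11, h12, h1k⟩ : σ 1 (x 1) = x 1 * x 2 * (x 1)⁻¹ ∧ σ 1 (x 2) = x 1 ∧
      ∀ j : ℕ+, j ≠ 1 → j ≠ 2 → σ 1 (x j) = x j := hσ 1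
  let ψ : MulAut F := MulAut.conj (x 1)⁻¹ * σ 1
  have hψ : ∀ g, ψ g = (x 1)⁻¹ * σ 1 g * x 1 := fun g => by simp [ψ]
  refine hψ w ▸ map_mem_endsAvoid ψ.toMonoidHom ψ.injective ?_ (fun h hh => ?_) hw
  · show ψ (x 1) = x 2
    rw [hψ, h11]; group
  · have hx : ∀ {k : ℕ+}, k ≠ 2 → x k ∈ (letterSubgroup {2}ᶜ : Subgroup F) :=
      fun hk => of_mem_letterSubgroup hk
    rw [letterSubgroup_eq_closure] at hh hx ⊢
    refine (Subgroup.closure_le ((Subgroup.closure _).comap ψ.toMonoidHom)).2 ?_ hh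
    rintro _ ⟨k, hk, rfl⟩
    show ψ (x k) ∈ Subgroup.closure (of '' ({2}ᶜ : Set ℕ+))
    rw [hψ]
    rcases eq_or_ne k 2 with rfl | hk2
    · rw [h12, inv_mul_cancel, one_mul]
      exact hx (by decide)
    · rw [h1k k hk hk2]
      exact mul_mem (mul_mem (inv_mem (hx (by decide))) (hx hk2)) (hx (by decide))

theorem sigma_one_apply_conj {w : F} (hw : w ∈ W) :
    ∃ w' ∈ W, σ 1 (x 1 * w * (x 1)⁻¹) = x 1 * w' * (x 1)⁻¹ := by
  refine ⟨x 2 * ((x 1)⁻¹ * σ 1 w * x 1) * (x 2)⁻¹,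
    FreeGroup.of_mul_mul_inv_mem_endsAvoid (by decide) (hσ.conj_sigma_one_mem_endsAvoid_two hw), ?_⟩
  rw [map_mul, map_mul, map_inv, hσ.sigma_one_x_one]
  group

theorem intersperse_prod_apply_x_one :
    ∀ {l : List (MulAut F)}, 2 ≤ l.length → (∀ τ ∈ l, τ ∈ xOneStabilizer) →
      ∃ w ∈ W, (l.intersperse (σ 1)).prod (x 1) = x 1 * w * (x 1)⁻¹
  | [], h, _ | [_], h, _ => by simp at h
  | [a, b], _, hl => by
    refine ⟨a (x 2), xOneStabilizer.apply_mem_W (hl a (by simp)) ?_, ?_⟩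
    · exact FreeGroup.mem_endsAvoid_of_mem_letterSubgroup
        (of_mem_letterSubgroup (show (2 : ℕ+) ∈ ({1}ᶜ : Set ℕ+) by decide)) (FreeGroup.of_ne_one _)
    · simp [MulAut.mul_apply, xOneStabilizer.apply_x_one (hl b (by simp)), hσ.sigma_one_x_one,
        xOneStabilizer.apply_x_one (hl a (by simp))]
  | a :: b :: c :: l, _, hl => by
    obtain ⟨w, hw, h⟩ := intersperse_prod_apply_x_one (l := b :: c :: l) (by simp)
      fun τ hτ => hl τ (List.mem_cons_of_mem _ hτ)
    obtain ⟨w', hw', h'⟩ := hσ.sigma_one_apply_conj hw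
    have ha := hl a (by simp)
    refine ⟨a w', xOneStabilizer.apply_mem_W ha hw', ?_⟩
    rw [List.intersperse_cons_cons, List.prod_cons, List.prod_cons, MulAut.mul_apply,
      MulAut.mul_apply, h, h', map_mul, map_mul, map_inv, xOneStabilizer.apply_x_one ha]

end IsArtin

theorem stmt8 (σ : ℕ+ → MulAut F) (hσ : IsArtin σ) (n : ℕ) (hn : 2 ≤ n)
    (α : Fin n → MulAut F)
    (hα : ∀ i : Fin n, α i ∈ Subgroup.closure {τ : MulAut F | ∃ j : ℕ+, j ≠ 1 ∧ τ = σ j}) :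
    (((List.ofFn α).intersperse (σ 1)).prod) (x 1) ∈
      {y : F | ∃ w ∈ W, y = x 1 * w * (x 1)⁻¹} :=
  hσ.intersperse_prod_apply_x_one (by simpa using hn) fun _ hτ => by
    obtain ⟨i, rfl⟩ := List.mem_ofFn.1 hτ
    exact hσ.closure_le_xOneStabilizer (hα i)
end

section
/- The operation α * β = α · s(β) · σ_1 · s(α^{-1}) on the braid group B_∞ is left self-distributive: α * (β * γ) = (α * β) * (α * γ) for all α, β, γ. -/
/-- The braid relations on the free group over the generator indices. -/
def braidRels : Set (FreeGroup ℕ+) :=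
  {r | (∃ i : ℕ+, r = .of i * .of (i + 1) * .of i * (.of (i + 1) * .of i * .of (i + 1))⁻¹) ∨
       (∃ i j : ℕ+, i + 1 < j ∧ r = .of i * .of j * (.of j * .of i)⁻¹)}

/-- The braid group `B_∞` on infinitely many strands. -/
abbrev Binf := PresentedGroup braidRels

/-- The generators `σ 1, σ 2, …` of `B_∞`. -/
noncomputable def σB (i : ℕ+) : Binf := PresentedGroup.of i

section ShiftConjugation

variable {G : Type*} [Group G]

/-- For `s` the shift of `B_∞` and `t = σ₁` this is the operation `α * β` of the statement. -/
def shiftConj (s : G →* G) (t α β : G) : G := α * s β * t * s α⁻¹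

theorem shiftConj_self_distrib (s : G →* G) (t : G) (hbraid : t * s t * t = s t * t * s t)
    (hcomm : ∀ g, Commute t (s (s g))) (α β γ : G) :
    shiftConj s t α (shiftConj s t β γ) =
      shiftConj s t (shiftConj s t α β) (shiftConj s t α γ) := by
  have hbraid' : t * s t * t * (s t)⁻¹ = s t * t := by rw [hbraid]; group
  symm
  calc shiftConj s t (shiftConj s t α β) (shiftConj s t α γ)
      = α * s β * (t * s (s γ)) * s t * ((s (s α))⁻¹ * t * s (s α)) * (s t)⁻¹ *
          (s (s β))⁻¹ * (s α)⁻¹ := by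
        simp only [shiftConj, map_mul, map_inv]; group
    _ = α * s β * s (s γ) * (t * s t * t * (s t)⁻¹) * (s (s β))⁻¹ * (s α)⁻¹ := by
        rw [(hcomm γ).eq, (hcomm α).symm.inv_mul_cancel]; group
    _ = α * s β * s (s γ) * s t * (t * (s (s β))⁻¹) * (s α)⁻¹ := by rw [hbraid']; group
    _ = shiftConj s t α (shiftConj s t β γ) := by
        rw [(hcomm β).inv_right.eq]; simp only [shiftConj, map_mul, map_inv]; group

end ShiftConjugation

theorem σB_braid (i : ℕ+) : σB i * σB (i + 1) * σB i = σB (i + 1) * σB i * σB (i + 1) :=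
  PresentedGroup.mk_eq_mk_of_mul_inv_mem (Or.inl ⟨i, rfl⟩)

theorem σB_commute {i j : ℕ+} (h : i + 1 < j) : Commute (σB i) (σB j) :=
  PresentedGroup.mk_eq_mk_of_mul_inv_mem (Or.inr ⟨i, j, h, rfl⟩)

theorem σB_one_commute_shift_shift (s : Binf →* Binf) (hs : ∀ i : ℕ+, s (σB i) = σB (i + 1))
    (g : Binf) : Commute (σB 1) (s (s g)) := by
  suffices s (s g) ∈ Subgroup.centralizer {σB 1} from
    (Subgroup.mem_centralizer_singleton_iff.mp this).symm
  refine PresentedGroup.generated_by braidRels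
    ((Subgroup.centralizer {σB 1}).comap (s.comp s)) (fun i => ?_) g
  rw [Subgroup.mem_comap, Subgroup.mem_centralizer_singleton_iff, MonoidHom.comp_apply]
  change s (s (σB i)) * σB 1 = σB 1 * s (s (σB i))
  rw [hs, hs]
  exact (σB_commute (add_lt_add_left (PNat.lt_add_left 1 i) 1)).symm.eq

theorem stmt10 (s : Binf →* Binf) (hs : ∀ i : ℕ+, s (σB i) = σB (i + 1))
    (op : Binf → Binf → Binf) (hop : ∀ α β : Binf, op α β = α * s β * σB 1 * s α⁻¹)
    (α β γ : Binf) : op α (op β γ) = op (op α β) (op α γ) := by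
  obtain rfl : op = shiftConj s (σB 1) := funext₂ hop
  refine shiftConj_self_distrib s (σB 1) ?_ (σB_one_commute_shift_shift s hs) α β γ
  rw [hs]
  exact σB_braid 1
end

section
/- For any α, β_1, …, β_k in B_∞, the element α^{-1} · (((α * β_1) * β_2 * ⋯) * β_k) can be written as a word in the generators {σ_1, σ_2, …} and inverses {σ_2^{-1}, σ_3^{-1}, …} containing at least one occurrence of σ_1 and no occurrence of σ_1^{-1}. -/
noncomputable def braidWord (l : List (ℕ+ × Bool)) : Binf :=
  (l.map fun p => if p.2 then σB p.1 else (σB p.1)⁻¹).prod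

lemma braidWord_append (l₁ l₂ : List (ℕ+ × Bool)) :
    braidWord (l₁ ++ l₂) = braidWord l₁ * braidWord l₂ := by
  simp [braidWord]

lemma braidWord_eq_lift_mk (l : List (ℕ+ × Bool)) :
    braidWord l = FreeGroup.lift σB (FreeGroup.mk l) := by
  rw [braidWord, FreeGroup.lift_mk]
  congr 1
  refine List.map_congr_left fun p _ => ?_
  cases p.2 <;> rfl

lemma mk_braidRels_eq_lift : PresentedGroup.mk braidRels = FreeGroup.lift σB :=
  FreeGroup.ext_hom _ _ fun i => (FreeGroup.lift_apply_of (f := σB) (x := i)).symm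

lemma braidWord_surjective : Function.Surjective braidWord := by
  intro g
  obtain ⟨f, rfl⟩ := PresentedGroup.mk_surjective braidRels g
  exact ⟨f.toWord, by rw [braidWord_eq_lift_mk, FreeGroup.mk_toWord, mk_braidRels_eq_lift]⟩

def shiftWord (l : List (ℕ+ × Bool)) : List (ℕ+ × Bool) :=
  l.map fun p => (p.1 + 1, p.2)

lemma one_not_mem_shiftWord (l : List (ℕ+ × Bool)) (b : Bool) : ((1 : ℕ+), b) ∉ shiftWord l := by
  simp only [shiftWord, List.mem_map, Prod.mk.injEq, not_exists, not_and]
  intro p _ h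
  exact absurd (congrArg PNat.val h) (by simp)

lemma map_braidWord_of_shift (s : Binf →* Binf) (hs : ∀ i : ℕ+, s (σB i) = σB (i + 1))
    (l : List (ℕ+ × Bool)) : s (braidWord l) = braidWord (shiftWord l) := by
  induction l with
  | nil => simp [braidWord, shiftWord]
  | cons p l ih =>
    rw [← List.singleton_append, braidWord_append, map_mul, ih]
    rcases p with ⟨i, _ | _⟩ <;> simp [braidWord, shiftWord, hs]

def IsSigmaOnePositive (g : Binf) : Prop :=
  ∃ l : List (ℕ+ × Bool), g = braidWord l ∧ (1, true) ∈ l ∧ (1, false) ∉ l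

lemma IsSigmaOnePositive.mul {g h : Binf} (hg : IsSigmaOnePositive g)
    (hh : IsSigmaOnePositive h) : IsSigmaOnePositive (g * h) := by
  obtain ⟨lg, rfl, hg₁, hg₂⟩ := hg
  obtain ⟨lh, rfl, -, hh₂⟩ := hh
  exact ⟨lg ++ lh, (braidWord_append lg lh).symm, List.mem_append_left _ hg₁, by simp [hg₂, hh₂]⟩

lemma isSigmaOnePositive_shift_mul_sigmaOne_mul_shift (s : Binf →* Binf)
    (hs : ∀ i : ℕ+, s (σB i) = σB (i + 1)) (g h : Binf) :
    IsSigmaOnePositive (s g * σB 1 * s h) := by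
  obtain ⟨lg, rfl⟩ := braidWord_surjective g
  obtain ⟨lh, rfl⟩ := braidWord_surjective h
  refine ⟨shiftWord lg ++ [(1, true)] ++ shiftWord lh, ?_, by simp, ?_⟩
  · rw [braidWord_append, braidWord_append, ← map_braidWord_of_shift s hs,
      ← map_braidWord_of_shift s hs]
    simp [braidWord]
  · simp only [List.mem_append, List.mem_singleton, Prod.mk.injEq, Bool.false_eq_true,
      and_false, or_false, not_or]
    exact ⟨one_not_mem_shiftWord lg false, one_not_mem_shiftWord lh false⟩

lemma isSigmaOnePositive_inv_mul_op (s : Binf →* Binf)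
    (hs : ∀ i : ℕ+, s (σB i) = σB (i + 1)) (op : Binf → Binf → Binf)
    (hop : ∀ α β : Binf, op α β = α * s β * σB 1 * s α⁻¹) (γ β : Binf) :
    IsSigmaOnePositive (γ⁻¹ * op γ β) := by
  simpa [hop, mul_assoc] using isSigmaOnePositive_shift_mul_sigmaOne_mul_shift s hs β γ⁻¹

lemma isSigmaOnePositive_inv_mul_foldl_cons (s : Binf →* Binf)
    (hs : ∀ i : ℕ+, s (σB i) = σB (i + 1)) (op : Binf → Binf → Binf)
    (hop : ∀ α β : Binf, op α β = α * s β * σB 1 * s α⁻¹) (L : List Binf) (γ β : Binf) :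
    IsSigmaOnePositive (γ⁻¹ * List.foldl op γ (β :: L)) := by
  induction L generalizing γ β with
  | nil => exact isSigmaOnePositive_inv_mul_op s hs op hop γ β
  | cons β' L ih =>
    have telescope : γ⁻¹ * List.foldl op γ (β :: β' :: L)
        = γ⁻¹ * op γ β * ((op γ β)⁻¹ * List.foldl op (op γ β) (β' :: L)) := by
      simp [mul_assoc]
    rw [telescope]
    exact (isSigmaOnePositive_inv_mul_op s hs op hop γ β).mul (ih (op γ β) β')

theorem stmt12 (s : Binf →* Binf) (hs : ∀ i : ℕ+, s (σB i) = σB (i + 1))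
    (op : Binf → Binf → Binf) (hop : ∀ α β : Binf, op α β = α * s β * σB 1 * s α⁻¹)
    (k : ℕ) (hk : 1 ≤ k) (α : Binf) (β : Fin k → Binf) :
    ∃ l : List (ℕ+ × Bool),
      α⁻¹ * List.foldl op α (List.ofFn β)
        = (l.map fun p => if p.2 then σB p.1 else (σB p.1)⁻¹).prod ∧
      (1, true) ∈ l ∧ (1, false) ∉ l := by
  obtain ⟨n, rfl⟩ : ∃ n, k = n + 1 := ⟨k - 1, by omega⟩
  rw [List.ofFn_succ]
  exact isSigmaOnePositive_inv_mul_foldl_cons s hs op hop _ α (β 0)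
end
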